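/- For n ≥ 3, the initial ideal of the join-meet ideal I of the diamond lattice D_{n+2} with respect to the reverse lexicographic order induced by x > y_1 > ⋯ > y_n > z is the monomial ideal in_<(I) = (y_i y_j : 1 ≤ i < j ≤ n) + (x y_k z : 1 ≤ k ≤ n−1) + (x y_n² z). -/

import Mathlib

open MvPolynomial

noncomputable def xP (K : Type*) [Field K] (n : ℕ) : MvPolynomial (Fin (n + 2)) K := X 0
noncomputable def zP (K : Type*) [Field K] (n : ℕ) : MvPolynomial (Fin (n + 2)) K :=
  X (Fin.last (n + 1))
noncomputable def yP (K : Type*) [Field K] (n : ℕ) (i : Fin n) : MvPolynomial (Fin (n + 2)) K :=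
  X i.succ.castSucc
noncomputable def diamondIdeal (K : Type*) [Field K] (n : ℕ) :
    Ideal (MvPolynomial (Fin (n + 2)) K) :=
  Ideal.span {f | ∃ i j : Fin n, i < j ∧ f = yP K n i * yP K n j - xP K n * zP K n}
def mdeg {σ : Type*} (m : σ →₀ ℕ) : ℕ := m.sum fun _ e => e
def revlexLt {N : ℕ} (a b : Fin N →₀ ℕ) : Prop :=
  mdeg a < mdeg b ∨ (mdeg a = mdeg b ∧ ∃ i, b i < a i ∧ ∀ j, i < j → a j = b j)
def IsLeadMon {N : ℕ} {K : Type*} [Field K] (f : MvPolynomial (Fin N) K) (m : Fin N →₀ ℕ) :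
    Prop :=
  m ∈ f.support ∧ ∀ m' ∈ f.support, m' ≠ m → revlexLt m' m
noncomputable def initialIdeal {N : ℕ} (K : Type*) [Field K]
    (I : Ideal (MvPolynomial (Fin N) K)) : Ideal (MvPolynomial (Fin N) K) :=
  Ideal.span {p | ∃ f ∈ I, ∃ m, IsLeadMon f m ∧ p = monomial m (1 : K)}

/-!
The ideal `I` is spanned by the binomials `y_i y_j - x z`, so for every map `φ` on exponent
vectors that is constant on the classes of the moves `y_i y_j ↔ x z`, the linear map
`monomial u c ↦ monomial (φ u) c` kills `I`. Take for `φ` the normal form `diamondNF`: a monomial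
admitting a move has all its pairs of `y`'s traded for `x z`, keeping at most one `y_n`; any other
monomial is left alone. This `φ` never increases a monomial in revlex order and fixes every
monomial divisible by none of `y_i y_j`, `x y_k z` (`k < n`), `x y_n² z`. Such a monomial cannot
lead any `f ∈ I`: the other monomials of `f` are smaller and stay smaller under `φ`, so its
coefficient would survive in the image `0` of `f`. Conversely each of these monomials leads a
binomial of `I`: `y_i y_j - x z`, `x z (y_k - y_n)` and `x z (y_n² - x z)`, the last two obtained
through a third index `t ≠ k, n` (hence `n ≥ 3`).
-/

open Finsupp

theorem mdeg_eq_degree {σ : Type*} (m : σ →₀ ℕ) : mdeg m = m.degree := rfl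

theorem revlexLt_asymm {N : ℕ} {a b : Fin N →₀ ℕ} (hab : revlexLt a b) : ¬ revlexLt b a := by
  rintro (hba | ⟨hd', j, hj, hj'⟩) <;> rcases hab with hab | ⟨hd, i, hi, hi'⟩
  · omega
  · omega
  · omega
  · rcases lt_trichotomy i j with h | rfl | h
    · have := hi' j h; omega
    · omega
    · have := hj' i h; omega

theorem revlexLt_of_last_lt {N : ℕ} {a b : Fin (N + 1) →₀ ℕ} (hd : a.degree = b.degree)
    (h : b (Fin.last N) < a (Fin.last N)) : revlexLt a b :=
  .inr ⟨by rwa [mdeg_eq_degree, mdeg_eq_degree], _, h,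
    fun j hj => absurd hj (Fin.le_last j).not_gt⟩

theorem revlexLt_of_last_eq_of_penultimate_lt {N : ℕ} {a b : Fin (N + 2) →₀ ℕ}
    (hd : a.degree = b.degree) (hl : a (Fin.last (N + 1)) = b (Fin.last (N + 1)))
    (h : b (Fin.last N).castSucc < a (Fin.last N).castSucc) : revlexLt a b := by
  refine .inr ⟨by rwa [mdeg_eq_degree, mdeg_eq_degree], _, h, fun j hj => ?_⟩
  rwa [(Fin.castSucc_lt_iff_succ_le.mp hj).antisymm' (Fin.le_last j)]

theorem isLeadMon_monomial_sub_monomial {N : ℕ} {K : Type*} [Field K] {e e' : Fin N →₀ ℕ}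
    (h : revlexLt e' e) : IsLeadMon (monomial e (1 : K) - monomial e' 1) e := by
  have hne : e' ≠ e := by rintro rfl; exact revlexLt_asymm h h
  classical
  refine ⟨by simp [coeff_monomial, hne], fun u hu hue => ?_⟩
  obtain rfl : u = e' := by
    by_contra hue'
    simp [coeff_monomial, Ne.symm hue, Ne.symm hue'] at hu
  exact h

section MapExponents

variable {σ R : Type*}

noncomputable def mapExponents [CommSemiring R] (φ : (σ →₀ ℕ) → σ →₀ ℕ) :
    MvPolynomial σ R →ₗ[R] MvPolynomial σ R :=
  AddMonoidAlgebra.mapDomainLinearMap R R φ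

theorem mapExponents_monomial [CommSemiring R] (φ : (σ →₀ ℕ) → σ →₀ ℕ) (u : σ →₀ ℕ) (c : R) :
    mapExponents φ (monomial u c) = monomial (φ u) c :=
  AddMonoidAlgebra.mapDomainLinearMap_single _ _ _

theorem coeff_mapExponents [CommSemiring R] [DecidableEq σ] (φ : (σ →₀ ℕ) → σ →₀ ℕ)
    (f : MvPolynomial σ R) (m : σ →₀ ℕ) :
    coeff m (mapExponents φ f) = ∑ u ∈ f.support with φ u = m, coeff u f := by
  simp [mapExponents, MvPolynomial.coeff, mapDomain, Finsupp.sum, single_apply, Finset.sum_ite,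
    MvPolynomial.support]

theorem mapExponents_eq_zero_of_mem_span [CommRing R] {φ : (σ →₀ ℕ) → σ →₀ ℕ}
    {G : Set (MvPolynomial σ R)}
    (hG : ∀ g ∈ G, ∃ α β, g = monomial α (1 : R) - monomial β 1 ∧ ∀ u, φ (u + α) = φ (u + β))
    {f : MvPolynomial σ R} (hf : f ∈ Ideal.span G) : mapExponents φ f = 0 := by
  suffices ∀ r, mapExponents φ (r * f) = 0 by simpa using this 1
  induction hf using Submodule.span_induction with
  | mem g hg =>
    obtain ⟨α, β, rfl, hαβ⟩ := hG g hg
    intro r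
    induction r using MvPolynomial.induction_on' with
    | monomial u c =>
      rw [mul_sub, monomial_mul, monomial_mul, map_sub, mapExponents_monomial,
        mapExponents_monomial, hαβ, sub_self]
    | add p q hp hq => rw [add_mul, map_add, hp, hq, add_zero]
  | zero => simp
  | add x y _ _ hx hy => intro r; rw [mul_add, map_add, hx, hy, add_zero]
  | smul a x _ hx => intro r; rw [smul_eq_mul, ← mul_assoc, hx]

theorem IsLeadMon.apply_ne_self {N : ℕ} {K : Type*} [Field K] {φ : (Fin N →₀ ℕ) → Fin N →₀ ℕ}
    (hφ : ∀ u, φ u = u ∨ revlexLt (φ u) u) {f : MvPolynomial (Fin N) K}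
    (hf : mapExponents φ f = 0) {m : Fin N →₀ ℕ} (hm : IsLeadMon f m) : φ m ≠ m := by
  intro hfix
  have hcoeff : coeff m (mapExponents φ f) = coeff m f := by
    rw [coeff_mapExponents, Finset.sum_eq_single_of_mem m (by simp [hfix, hm.1])]
    intro u hu hum
    obtain ⟨hu, hφu⟩ := Finset.mem_filter.mp hu
    rcases hφ u with h | h
    · exact (hum (h.symm.trans hφu)).elim
    · exact (revlexLt_asymm (hm.2 u hu hum) (hφu ▸ h)).elim
  rw [hf, coeff_zero] at hcoeff
  exact MvPolynomial.mem_support_iff.mp hm.1 hcoeff.symm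

end MapExponents

section Diamond

variable {n : ℕ}

theorem forall_fin_add_two_iff {P : Fin (n + 2) → Prop} :
    (∀ t, P t) ↔ P 0 ∧ (∀ k : Fin n, P k.castSucc.succ) ∧ P (Fin.last (n + 1)) := by
  rw [Fin.forall_fin_succ', Fin.forall_fin_succ (P := fun i => P i.castSucc), and_assoc]
  rfl

-- `k.castSucc.succ`, the simp normal form of `k.succ.castSucc`, is the index of `yP K n k`.
def yDeg (m : Fin (n + 2) →₀ ℕ) : ℕ := ∑ k : Fin n, m k.castSucc.succ

theorem degree_eq_add_yDeg (m : Fin (n + 2) →₀ ℕ) :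
    m.degree = m 0 + yDeg m + m (Fin.last (n + 1)) := by
  rw [degree_eq_sum, Fin.sum_univ_castSucc, Fin.sum_univ_succ]
  simp [yDeg]

theorem apply_le_yDeg (m : Fin (n + 2) →₀ ℕ) (k : Fin n) : m k.castSucc.succ ≤ yDeg m :=
  Finset.single_le_sum (f := fun k => m k.castSucc.succ) (by simp) (Finset.mem_univ k)

theorem apply_add_apply_le_yDeg (m : Fin (n + 2) →₀ ℕ) {k l : Fin n} (hkl : k ≠ l) :
    m k.castSucc.succ + m l.castSucc.succ ≤ yDeg m := by
  rw [← Finset.sum_pair (f := fun k => m k.castSucc.succ) hkl]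
  exact Finset.sum_le_sum_of_subset (Finset.subset_univ _)

theorem yDeg_eq_apply {m : Fin (n + 2) →₀ ℕ} {k : Fin n}
    (h : ∀ l ≠ k, m l.castSucc.succ = 0) : yDeg m = m k.castSucc.succ :=
  Finset.sum_eq_single_of_mem k (Finset.mem_univ k) fun l _ hl => h l hl

def yLast (hn : 0 < n) : Fin n := ⟨n - 1, Nat.sub_lt hn one_pos⟩

theorem succ_castSucc_yLast (hn : 0 < n) :
    (yLast hn).castSucc.succ = (Fin.last n).castSucc := by
  ext; simp [yLast]; omega

def DiamondReducible (m : Fin (n + 2) →₀ ℕ) : Prop :=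
  (∃ i j : Fin n, i ≠ j ∧ 0 < m i.castSucc.succ ∧ 0 < m j.castSucc.succ) ∨
    (0 < m 0 ∧ 0 < m (Fin.last (n + 1)))

noncomputable def xyzExp (hn : 0 < n) (a b c : ℕ) : Fin (n + 2) →₀ ℕ :=
  single 0 a + single (yLast hn).castSucc.succ b + single (Fin.last (n + 1)) c

open Classical in
noncomputable def diamondNF (hn : 0 < n) (m : Fin (n + 2) →₀ ℕ) : Fin (n + 2) →₀ ℕ :=
  if DiamondReducible m then
    xyzExp hn (m 0 + yDeg m / 2) (yDeg m % 2) (m (Fin.last (n + 1)) + yDeg m / 2)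
  else m

theorem diamondNF_of_reducible (hn : 0 < n) {m : Fin (n + 2) →₀ ℕ} (hred : DiamondReducible m) :
    diamondNF hn m =
      xyzExp hn (m 0 + yDeg m / 2) (yDeg m % 2) (m (Fin.last (n + 1)) + yDeg m / 2) :=
  if_pos hred

theorem diamondNF_of_not_reducible (hn : 0 < n) {m : Fin (n + 2) →₀ ℕ}
    (hred : ¬ DiamondReducible m) : diamondNF hn m = m :=
  if_neg hred

theorem diamondNF_add_single_add_single (hn : 0 < n) (u : Fin (n + 2) →₀ ℕ) {i j : Fin n}
    (hij : i ≠ j) :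
    diamondNF hn (u + (single i.castSucc.succ 1 + single j.castSucc.succ 1)) =
      diamondNF hn (u + xyzExp hn 1 0 1) := by
  have hred₁ : DiamondReducible (u + (single i.castSucc.succ 1 + single j.castSucc.succ 1)) :=
    .inl ⟨i, j, hij, by simp, by simp⟩
  have hred₂ : DiamondReducible (u + xyzExp hn 1 0 1) := .inr ⟨by simp [xyzExp], by simp [xyzExp]⟩
  have hdeg₁ : yDeg (u + (single i.castSucc.succ 1 + single j.castSucc.succ 1)) = yDeg u + 2 := by
    simp [yDeg, Finset.sum_add_distrib, single_apply]
  have hdeg₂ : yDeg (u + xyzExp hn 1 0 1) = yDeg u := by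
    simp [yDeg, xyzExp]
  rw [diamondNF_of_reducible hn hred₁, diamondNF_of_reducible hn hred₂, hdeg₁, hdeg₂]
  congr 1 <;> simp [xyzExp] <;> omega

theorem diamondNF_eq_self_of_forall_ne_yLast (hn : 0 < n) {m : Fin (n + 2) →₀ ℕ}
    (hy : ∀ k ≠ yLast hn, m k.castSucc.succ = 0) (hyLast : m (yLast hn).castSucc.succ < 2) :
    diamondNF hn m = m := by
  by_cases hred : DiamondReducible m
  swap
  · exact diamondNF_of_not_reducible hn hred
  have hdeg := yDeg_eq_apply hy
  rw [diamondNF_of_reducible hn hred, Finsupp.ext_iff, forall_fin_add_two_iff]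
  refine ⟨by simp [xyzExp]; omega, fun k => ?_, by simp [xyzExp]; omega⟩
  by_cases hk : k = yLast hn
  · subst hk; simp [xyzExp]; omega
  · simp [xyzExp, hk, hy k hk]

theorem diamondNF_eq_or_revlexLt (hn : 0 < n) (m : Fin (n + 2) →₀ ℕ) :
    diamondNF hn m = m ∨ revlexLt (diamondNF hn m) m := by
  by_cases hred : DiamondReducible m
  swap
  · exact .inl (diamondNF_of_not_reducible hn hred)
  have hnf := diamondNF_of_reducible hn hred
  have hdeg : (diamondNF hn m).degree = m.degree := by
    rw [hnf, degree_eq_add_yDeg m]; simp [xyzExp]; omega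
  have hyLast := apply_le_yDeg m (yLast hn)
  rcases lt_or_ge (yDeg m) 2 with hB | hB
  · by_cases hy : m (yLast hn).castSucc.succ = yDeg m
    · refine .inl (diamondNF_eq_self_of_forall_ne_yLast hn (fun k hk => ?_) (by omega))
      have := apply_add_apply_le_yDeg m hk
      omega
    · refine .inr (revlexLt_of_last_eq_of_penultimate_lt hdeg
        (by rw [hnf]; simp [xyzExp]; omega) ?_)
      rw [hnf, ← succ_castSucc_yLast hn]
      simp [xyzExp]; omega
  · exact .inr (revlexLt_of_last_lt hdeg (by rw [hnf]; simp [xyzExp]; omega))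

def diamondExps (hn : 0 < n) : Set (Fin (n + 2) →₀ ℕ) :=
  {e | ∃ i j : Fin n, i < j ∧ e = single i.castSucc.succ 1 + single j.castSucc.succ 1} ∪
    {e | ∃ k : Fin n, (k : ℕ) < n - 1 ∧ e = xyzExp hn 1 0 1 + single k.castSucc.succ 1} ∪
    {xyzExp hn 1 2 1}

theorem le_iff_forall_fin_add_two {a b : Fin (n + 2) →₀ ℕ} :
    a ≤ b ↔ a 0 ≤ b 0 ∧ (∀ k : Fin n, a k.castSucc.succ ≤ b k.castSucc.succ) ∧
      a (Fin.last (n + 1)) ≤ b (Fin.last (n + 1)) :=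
  Finsupp.le_def.trans forall_fin_add_two_iff

theorem exists_mem_diamondExps_le_of_pos_of_pos (hn : 0 < n) {m : Fin (n + 2) →₀ ℕ}
    {i j : Fin n} (hij : i ≠ j) (hi : 0 < m i.castSucc.succ) (hj : 0 < m j.castSucc.succ) :
    ∃ e ∈ diamondExps hn, e ≤ m := by
  wlog hlt : i < j generalizing i j
  · exact this hij.symm hj hi (hij.symm.lt_of_le (not_lt.mp hlt))
  refine ⟨_, .inl (.inl ⟨i, j, hlt, rfl⟩),
    le_iff_forall_fin_add_two.mpr ⟨by simp, fun k => ?_, by simp⟩⟩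
  simp only [Finsupp.coe_add, Pi.add_apply, single_apply, Fin.succ_inj, Fin.castSucc_inj]
  split_ifs <;> grind

theorem exists_mem_diamondExps_le_of_ne_yLast (hn : 0 < n) {m : Fin (n + 2) →₀ ℕ}
    (hx : 0 < m 0) (hz : 0 < m (Fin.last (n + 1))) {k : Fin n} (hk : k ≠ yLast hn)
    (hy : 0 < m k.castSucc.succ) : ∃ e ∈ diamondExps hn, e ≤ m := by
  have hk_lt : (k : ℕ) < n - 1 := by
    have : (k : ℕ) ≠ n - 1 := fun h => hk (Fin.ext h)
    omega
  refine ⟨_, .inl (.inr ⟨k, hk_lt, rfl⟩),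
    le_iff_forall_fin_add_two.mpr ⟨by simpa [xyzExp], fun l => ?_, by simpa [xyzExp]⟩⟩
  by_cases hl : l = k
  · subst hl; simpa [xyzExp, hk]
  · simp [xyzExp, Ne.symm hl]

theorem exists_mem_diamondExps_le_of_two_le (hn : 0 < n) {m : Fin (n + 2) →₀ ℕ}
    (hx : 0 < m 0) (hz : 0 < m (Fin.last (n + 1))) (hy : 2 ≤ m (yLast hn).castSucc.succ) :
    ∃ e ∈ diamondExps hn, e ≤ m := by
  refine ⟨_, .inr rfl,
    le_iff_forall_fin_add_two.mpr ⟨by simpa [xyzExp], fun l => ?_, by simpa [xyzExp]⟩⟩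
  by_cases hl : l = yLast hn
  · subst hl; simpa [xyzExp]
  · simp [xyzExp, hl]

theorem diamondNF_eq_self (hn : 0 < n) {m : Fin (n + 2) →₀ ℕ}
    (hm : ∀ e ∈ diamondExps hn, ¬ e ≤ m) : diamondNF hn m = m := by
  by_cases hred : DiamondReducible m
  swap
  · exact diamondNF_of_not_reducible hn hred
  rcases hred with ⟨i, j, hij, hi, hj⟩ | ⟨hx, hz⟩
  · obtain ⟨e, he, hle⟩ := exists_mem_diamondExps_le_of_pos_of_pos hn hij hi hj
    exact (hm e he hle).elim
  refine diamondNF_eq_self_of_forall_ne_yLast hn (fun k hk => ?_) ?_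
  · by_contra hy
    obtain ⟨e, he, hle⟩ := exists_mem_diamondExps_le_of_ne_yLast hn hx hz hk (Nat.pos_of_ne_zero hy)
    exact hm e he hle
  · by_contra! hy
    obtain ⟨e, he, hle⟩ := exists_mem_diamondExps_le_of_two_le hn hx hz hy
    exact hm e he hle

end Diamond

section DiamondIdeal

variable {n : ℕ} {K : Type*} [Field K]

theorem monomial_xyzExp (hn : 0 < n) (a b c : ℕ) :
    monomial (xyzExp hn a b c) (1 : K) = xP K n ^ a * yP K n (yLast hn) ^ b * zP K n ^ c := by
  rw [xyzExp, monomial_add_single, monomial_add_single, ← X_pow_eq_monomial]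
  rfl

theorem xP_mul_zP (hn : 0 < n) : xP K n * zP K n = monomial (xyzExp hn 1 0 1) 1 := by
  simp [monomial_xyzExp]

theorem monomial_add_single_castSucc_succ (e : Fin (n + 2) →₀ ℕ) (k : Fin n) :
    monomial (e + single k.castSucc.succ 1) (1 : K) = monomial e 1 * yP K n k := by
  rw [monomial_add_single, pow_one]
  rfl

theorem yP_mul_yP (i j : Fin n) :
    yP K n i * yP K n j = monomial (single i.castSucc.succ 1 + single j.castSucc.succ 1) 1 := by
  rw [monomial_add_single, ← X_pow_eq_monomial, pow_one, pow_one]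
  rfl

theorem yP_mul_yP_sub_mem {i j : Fin n} (hij : i ≠ j) :
    yP K n i * yP K n j - xP K n * zP K n ∈ diamondIdeal K n := by
  rcases hij.lt_or_gt with h | h
  · exact Ideal.subset_span ⟨i, j, h, rfl⟩
  · rw [mul_comm (yP K n i)]
    exact Ideal.subset_span ⟨j, i, h, rfl⟩

theorem xP_mul_zP_mul_sub_mem (hn : 3 ≤ n) (i j : Fin n) :
    xP K n * zP K n * (yP K n i - yP K n j) ∈ diamondIdeal K n := by
  obtain ⟨t, hti, htj⟩ := Fin.exists_ne_and_ne_of_two_lt i j hn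
  have h : xP K n * zP K n * (yP K n i - yP K n j) =
      yP K n j * (yP K n i * yP K n t - xP K n * zP K n) -
        yP K n i * (yP K n j * yP K n t - xP K n * zP K n) := by ring
  rw [h]
  exact sub_mem (Ideal.mul_mem_left _ _ (yP_mul_yP_sub_mem hti.symm))
    (Ideal.mul_mem_left _ _ (yP_mul_yP_sub_mem htj.symm))

theorem xP_mul_zP_mul_sq_sub_mem (hn : 3 ≤ n) (k : Fin n) :
    xP K n * zP K n * (yP K n k ^ 2 - xP K n * zP K n) ∈ diamondIdeal K n := by
  obtain ⟨t, htk, -⟩ := Fin.exists_ne_and_ne_of_two_lt k k hn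
  have h : xP K n * zP K n * (yP K n k ^ 2 - xP K n * zP K n) =
      xP K n * zP K n * (yP K n k * yP K n t - xP K n * zP K n) +
        yP K n k * (xP K n * zP K n * (yP K n k - yP K n t)) := by ring
  rw [h]
  exact add_mem (Ideal.mul_mem_left _ _ (yP_mul_yP_sub_mem htk.symm))
    (Ideal.mul_mem_left _ _ (xP_mul_zP_mul_sub_mem hn k t))

theorem mapExponents_diamondNF_eq_zero (hn : 0 < n) {f : MvPolynomial (Fin (n + 2)) K}
    (hf : f ∈ diamondIdeal K n) : mapExponents (diamondNF hn) f = 0 := by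
  refine mapExponents_eq_zero_of_mem_span ?_ hf
  rintro _ ⟨i, j, hij, rfl⟩
  exact ⟨_, _, by rw [yP_mul_yP, xP_mul_zP hn],
    fun u => diamondNF_add_single_add_single hn u hij.ne⟩

theorem IsLeadMon.exists_mem_diamondExps_le (hn : 0 < n) {f : MvPolynomial (Fin (n + 2)) K}
    (hf : f ∈ diamondIdeal K n) {m : Fin (n + 2) →₀ ℕ} (hm : IsLeadMon f m) :
    ∃ e ∈ diamondExps hn, e ≤ m := by
  by_contra! h
  exact hm.apply_ne_self (diamondNF_eq_or_revlexLt hn) (mapExponents_diamondNF_eq_zero hn hf)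
    (diamondNF_eq_self hn h)

theorem exists_isLeadMon_of_mem_diamondExps (hn : 3 ≤ n) {e : Fin (n + 2) →₀ ℕ}
    (he : e ∈ diamondExps (by omega)) : ∃ f ∈ diamondIdeal K n, IsLeadMon f e := by
  have hn₀ : 0 < n := by omega
  rcases he with (⟨i, j, hij, rfl⟩ | ⟨k, hk, rfl⟩) | rfl
  · refine ⟨_, yP_mul_yP_sub_mem hij.ne, ?_⟩
    rw [yP_mul_yP, xP_mul_zP hn₀]
    exact isLeadMon_monomial_sub_monomial
      (revlexLt_of_last_lt (by simp [xyzExp]) (by simp [xyzExp]))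
  · have hk' : k ≠ yLast hn₀ := fun h => by simp [h, yLast] at hk
    refine ⟨_, xP_mul_zP_mul_sub_mem hn k (yLast hn₀), ?_⟩
    have h : xP K n * zP K n * (yP K n k - yP K n (yLast hn₀)) =
        monomial (xyzExp hn₀ 1 0 1 + single k.castSucc.succ 1) 1 -
          monomial (xyzExp hn₀ 1 1 1) 1 := by
      rw [monomial_add_single_castSucc_succ, monomial_xyzExp, monomial_xyzExp]
      ring
    rw [h]
    refine isLeadMon_monomial_sub_monomial
      (revlexLt_of_last_eq_of_penultimate_lt (by simp [xyzExp]) (by simp [xyzExp]) ?_)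
    rw [← succ_castSucc_yLast hn₀]
    simp [xyzExp, hk']
  · refine ⟨_, xP_mul_zP_mul_sq_sub_mem hn (yLast hn₀), ?_⟩
    have h : xP K n * zP K n * (yP K n (yLast hn₀) ^ 2 - xP K n * zP K n) =
        monomial (xyzExp hn₀ 1 2 1) 1 - monomial (xyzExp hn₀ 2 0 2) 1 := by
      rw [monomial_xyzExp, monomial_xyzExp]
      ring
    rw [h]
    exact isLeadMon_monomial_sub_monomial
      (revlexLt_of_last_lt (by simp [xyzExp]) (by simp [xyzExp]))

theorem image_monomial_diamondExps (hn : 0 < n) :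
    (fun e => monomial e (1 : K)) '' diamondExps hn =
      {f | ∃ i j : Fin n, i < j ∧ f = yP K n i * yP K n j} ∪
        {f | ∃ k : Fin n, (k : ℕ) < n - 1 ∧ f = xP K n * yP K n k * zP K n} ∪
        {xP K n * (yP K n ⟨n - 1, by omega⟩) ^ 2 * zP K n} := by
  rw [diamondExps, Set.image_union, Set.image_union, Set.image_singleton, monomial_xyzExp, pow_one,
    pow_one]
  congr 2 <;> ext f <;> simp only [Set.mem_image, Set.mem_ofPred_eq]
  · constructor
    · rintro ⟨_, ⟨i, j, hij, rfl⟩, rfl⟩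
      exact ⟨i, j, hij, (yP_mul_yP i j).symm⟩
    · rintro ⟨i, j, hij, rfl⟩
      exact ⟨_, ⟨i, j, hij, rfl⟩, (yP_mul_yP i j).symm⟩
  · have h (k : Fin n) : monomial (xyzExp hn 1 0 1 + single k.castSucc.succ 1) (1 : K) =
        xP K n * yP K n k * zP K n := by
      rw [monomial_add_single_castSucc_succ, ← xP_mul_zP]
      ring
    constructor
    · rintro ⟨_, ⟨k, hk, rfl⟩, rfl⟩
      exact ⟨k, hk, h k⟩
    · rintro ⟨k, hk, rfl⟩
      exact ⟨_, ⟨k, hk, rfl⟩, h k⟩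

end DiamondIdeal

theorem initial_ideal_of_diamond (K : Type*) [Field K] (n : ℕ) (hn : 3 ≤ n) :
    initialIdeal K (diamondIdeal K n) =
      Ideal.span
        ({f | ∃ i j : Fin n, i < j ∧ f = yP K n i * yP K n j} ∪
          {f | ∃ k : Fin n, (k : ℕ) < n - 1 ∧ f = xP K n * yP K n k * zP K n} ∪
          {xP K n * (yP K n ⟨n - 1, by omega⟩) ^ 2 * zP K n}) := by
  rw [← image_monomial_diamondExps (by omega)]
  apply le_antisymm
  · refine Ideal.span_le.mpr ?_
    rintro _ ⟨f, hf, m, hm, rfl⟩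
    exact mem_ideal_span_monomial_image.mpr
      (by simpa using hm.exists_mem_diamondExps_le (by omega) hf)
  · refine Ideal.span_le.mpr ?_
    rintro _ ⟨e, he, rfl⟩
    obtain ⟨f, hf, hfe⟩ := exists_isLeadMon_of_mem_diamondExps (K := K) hn he
    exact Ideal.subset_span ⟨f, hf, e, hfe, rfl⟩
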